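/- arXiv:math/9912018 — 2 statements merged into one kernel-verified Lean document; each statement's English description precedes it below -/
import Mathlib

section
/- Every element of the monoid ℳ admits a unique factorization as a product g(m₁)·g(m₂)⋯g(m_r) with r ≥ 0 and integers m₁,…,m_r ≥ 1 (the empty product being the identity matrix); equivalently, the map sending a finite sequence (m₁,…,m_r) of positive integers to the matrix product g(m₁)⋯g(m_r) is a bijection from the set of all finite sequences of positive integers onto ℳ. -/
open Complex Filter Set Topology
open scoped ENNReal NNReal

noncomputable section

/-- The complement in `ℂ` of the real segment `[a, b]`. -/
def cutPlane (a b : ℝ) : Set ℂ := (Complex.ofReal '' Set.Icc a b)ᶜ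

/-- `𝒪¹(ℂ̄ ∖ [a,b])`: holomorphic on `ℂ ∖ [a,b]`, vanishing at infinity. -/
def O1 (a b : ℝ) : Set (ℂ → ℂ) :=
  {φ | DifferentiableOn ℂ φ (cutPlane a b) ∧
       Tendsto φ (Bornology.cobounded ℂ) (nhds 0)}

/-- `𝒪³(ℂ̄ ∖ [a,b])`: holomorphic on `ℂ ∖ [a,b]`, with `z²ψ(z) → 0` at infinity. -/
def O3 (a b : ℝ) : Set (ℂ → ℂ) :=
  {ψ | DifferentiableOn ℂ ψ (cutPlane a b) ∧
       Tendsto (fun z => z ^ 2 * ψ z) (Bornology.cobounded ℂ) (nhds 0)}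

/-- The `m`-th term (for the integer `m+1 ≥ 1`) of the series defining `T`. -/
def Tterm (φ : ℂ → ℂ) (m : ℕ) (z : ℂ) : ℂ :=
  -z * (φ (z⁻¹ - ((m : ℂ) + 1)) - φ (-((m : ℂ) + 1))) + deriv φ (-((m : ℂ) + 1))

/-- The operator `T`. -/
def Tbrj (φ : ℂ → ℂ) : ℂ → ℂ := fun z => ∑' m : ℕ, Tterm φ m z

/-- The operator `T⁽³⁾`. -/
def T3brj (ψ : ℂ → ℂ) : ℂ → ℂ := fun z => -∑' m : ℕ, (z⁻¹) ^ 3 * ψ (z⁻¹ - ((m : ℂ) + 1))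

/-- `g(m) = (0 1; 1 m)`. -/
def gmat (m : ℤ) : Matrix (Fin 2) (Fin 2) ℤ := !![0, 1; 1, m]

/-- The monoid `ℳ`. -/
def Mmon : Set (Matrix (Fin 2) (Fin 2) ℤ) :=
  {g | g = 1 ∨
    ((g 0 0 * g 1 1 - g 0 1 * g 1 0 = 1 ∨ g 0 0 * g 1 1 - g 0 1 * g 1 0 = -1) ∧
      g 0 1 ≤ g 1 1 ∧ g 0 0 ≤ g 0 1 ∧ 0 ≤ g 0 0 ∧ g 1 0 ≤ g 1 1 ∧ g 0 0 ≤ g 1 0)}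

/-- The operator `L_g` on `𝒪¹(ℂ̄ ∖ [0,1])`, for `g = (a b; c d) ∈ ℳ`. -/
def Lop (g : Matrix (Fin 2) (Fin 2) ℤ) (φ : ℂ → ℂ) : ℂ → ℂ := fun z =>
  if g = 1 then φ z
  else
    ((g 0 0 : ℂ) - (g 1 0 : ℂ) * z) *
        (φ (((g 1 1 : ℂ) * z - (g 0 1 : ℂ)) / ((g 0 0 : ℂ) - (g 1 0 : ℂ) * z)) -
          φ (-(g 1 1 : ℂ) / (g 1 0 : ℂ))) -
      ((g 0 0 * g 1 1 - g 0 1 * g 1 0 : ℤ) : ℂ) * ((g 1 0 : ℂ))⁻¹ *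
        deriv φ (-(g 1 1 : ℂ) / (g 1 0 : ℂ))

/-- `Σ_ℳ φ`, the sum of the family `(L_g φ)_{g ∈ ℳ}`. -/
def sumM (φ : ℂ → ℂ) : ℂ → ℂ := fun z => ∑' g : Mmon, Lop g.1 φ z

/-- The domain `D`. -/
def Dset : Set ℂ :=
  {z | ‖z‖ ≤ 1 ∧ 1 ≤ ‖z - Complex.I‖ ∧ 1 ≤ ‖z + Complex.I‖ ∧ 0 < z.re}

/-- The domain `D₀`. -/
def D0set : Set ℂ := {z | ‖z + 1‖ ≤ 1 ∧ Real.sqrt 3 / 2 - 1 ≤ z.re}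

/-- The domain `D₁`. -/
def D1set : Set ℂ :=
  {z | 1 ≤ ‖z‖ ∧ ‖z - (1 / Real.sqrt 3 : ℝ)‖ ≤ 1 / Real.sqrt 3}

/-- The domain `H₀`. -/
def H0set : Set ℂ := {z | ‖z - Complex.I‖ ≤ 1 ∧ 1 ≤ ‖z + 1‖ ∧ z.im ≤ 1 / 2}

/-- The domain `H₀′`. -/
def H0set' : Set ℂ := {z | (starRingEnd ℂ) z ∈ H0set}

/-- The domain `Δ`. -/
def Δset : Set ℂ := {z | ‖z‖ ≤ 1 ∧ 1 ≤ ‖z + 1‖ ∧ |z.im| ≤ 1 / 2}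

/-- The domain `D∞`. -/
def Dinf : Set ℂ :=
  {z | 1 / 2 < |z.im|} ∪ {z | z.re < Real.sqrt 3 / 2 - 1} ∪
    {z | Real.sqrt 3 / 2 < z.re ∧ 1 / Real.sqrt 3 < ‖z - (1 / Real.sqrt 3 : ℝ)‖}

end

namespace BRJ

lemma fin2_eq_iff (a b c d e f g h : ℤ) :
    !![a,b;c,d] = !![e,f;g,h] ↔ a = e ∧ b = f ∧ c = g ∧ d = h := by
  rw [← Matrix.ext_iff, Fin.forall_fin_two]
  simp [Fin.forall_fin_two]
  tauto

lemma mem_iff (a b c d : ℤ) :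
    !![a,b;c,d] ∈ Mmon ↔
      (a = 1 ∧ b = 0 ∧ c = 0 ∧ d = 1) ∨
        ((a*d - b*c = 1 ∨ a*d - b*c = -1) ∧ b ≤ d ∧ a ≤ b ∧ 0 ≤ a ∧ c ≤ d ∧ a ≤ c) := by
  rw [Mmon, Set.mem_setOf_eq, Matrix.one_fin_two, fin2_eq_iff]
  norm_num

lemma gmat_mul (m a b c d : ℤ) :
    gmat m * !![a,b;c,d] = !![c, d; a + m*c, b + m*d] := by
  rw [gmat, Matrix.mul_fin_two, fin2_eq_iff]
  refine ⟨by ring, by ring, by ring, by ring⟩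

/-- `hmat m a b c d` is the matrix `g(m)⁻¹ * !![a,b;c,d]`. -/
def hmat (m a b c d : ℤ) : Matrix (Fin 2) (Fin 2) ℤ := !![c - m*a, d - m*b; a, b]

lemma gmat_hmat (m a b c d : ℤ) : gmat m * hmat m a b c d = !![a,b;c,d] := by
  rw [hmat, gmat_mul, fin2_eq_iff]
  refine ⟨rfl, rfl, by ring, by ring⟩

lemma eta4 (g : Matrix (Fin 2) (Fin 2) ℤ) : ∃ a b c d, g = !![a,b;c,d] :=
  ⟨_,_,_,_, Matrix.eta_fin_two g⟩

lemma gmat_mem (m : ℤ) (hm : 1 ≤ m) (g : Matrix (Fin 2) (Fin 2) ℤ) (hg : g ∈ Mmon) :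
    gmat m * g ∈ Mmon := by
  obtain ⟨a,b,c,d, rfl⟩ := eta4 g
  rw [mem_iff] at hg
  rw [gmat_mul, mem_iff]
  rcases hg with ⟨rfl,rfl,rfl,rfl⟩ | ⟨hdet, h1,h2,h3,h4,h5⟩
  · right
    norm_num
    omega
  · have hd : (0:ℤ) ≤ d := le_trans h3 (le_trans h2 h1)
    right
    refine ⟨?_, by nlinarith, h4, by linarith, by nlinarith, by nlinarith⟩
    rcases hdet with h | h
    · right; nlinarith
    · left; nlinarith

lemma mem_d_pos {g : Matrix (Fin 2) (Fin 2) ℤ} (hg : g ∈ Mmon) : 1 ≤ g 1 1 := by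
  obtain ⟨a,b,c,d, rfl⟩ := eta4 g
  rw [mem_iff] at hg
  have hval : !![a,b;c,d] 1 1 = d := by norm_num
  rw [hval]
  rcases hg with ⟨rfl,rfl,rfl,rfl⟩ | ⟨hdet, h1,h2,h3,h4,h5⟩
  · norm_num
  · by_contra hcon
    push_neg at hcon
    have hb : b = 0 := le_antisymm (by linarith) (le_trans h3 h2)
    have ha : a = 0 := le_antisymm (by linarith [h3, h2]) h3
    rcases hdet with h | h <;> simp [ha, hb] at h

lemma head_aux (a b c d m m' : ℤ) (hlt : m < m')
    (H : hmat m a b c d ∈ Mmon) (H' : hmat m' a b c d ∈ Mmon) : False := by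
  rw [hmat, mem_iff] at H H'
  rcases H with ⟨e1, e2, e3, e4⟩ | ⟨hdet, h1, h2, h3, h4, h5⟩
  · subst e3; subst e4
    simp only [mul_zero, mul_one, sub_zero] at *
    rcases H' with ⟨f1, f2, f3, f4⟩ | ⟨hdet', h1', h2', h3', h4', h5'⟩
    · omega
    · omega
  · rcases H' with ⟨f1, f2, f3, f4⟩ | ⟨hdet', h1', h2', h3', h4', h5'⟩
    · subst f3; subst f4
      simp only [mul_zero, mul_one, sub_zero] at *
      omega
    · have ha0 : 0 ≤ a := le_trans h3 h5
      rcases eq_or_lt_of_le ha0 with ha | ha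
      · subst ha
        simp only [mul_zero, sub_zero] at *
        have hc : c = 0 := le_antisymm h5 h3
        rcases hdet with h | h <;> nlinarith
      · have hA' : c - m'*a = 0 := by nlinarith
        have hx : 0 ≤ d - m'*b := le_trans h3' h2'
        have hxa : (d - m'*b)*a = 1 := by
          rcases hdet' with h | h
          · nlinarith
          · nlinarith
        have hx1 : 1 ≤ d - m'*b := by
          rcases eq_or_lt_of_le hx with h | h
          · rw [← h] at hxa; simp at hxa
          · omega
        have ha1 : a = 1 := by nlinarith
        have hd' : d - m'*b = 1 := by rw [ha1, mul_one] at hxa; exact hxa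
        have hb1 : 1 ≤ b := by omega
        nlinarith

lemma head_unique (a b c d m m' : ℤ)
    (H : hmat m a b c d ∈ Mmon) (H' : hmat m' a b c d ∈ Mmon) : m = m' := by
  rcases lt_trichotomy m m' with h | h | h
  · exact absurd (head_aux a b c d m m' h H H') (by simp)
  · exact h
  · exact absurd (head_aux a b c d m' m h H' H) (by simp)

/-- Abbreviation for the product map. -/
def Pprod (l : List ℕ+) : Matrix (Fin 2) (Fin 2) ℤ := (l.map fun m => gmat (m : ℕ)).prod

lemma Pprod_nil : Pprod ([] : List ℕ+) = 1 := by simp [Pprod]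

lemma Pprod_cons (m : ℕ+) (t : List ℕ+) :
    Pprod (m :: t) = gmat ((m : ℕ) : ℤ) * Pprod t := by
  simp [Pprod]

lemma prod_mem : ∀ l : List ℕ+, Pprod l ∈ Mmon
  | [] => Or.inl (by simp [Pprod])
  | m :: t => by
    rw [Pprod_cons]
    exact gmat_mem _ (by exact_mod_cast m.one_le) _ (prod_mem t)

lemma prod_ne_one (m : ℕ+) (t : List ℕ+) : Pprod (m :: t) ≠ 1 := by
  obtain ⟨A,B,C,D,hP⟩ := eta4 (Pprod t)
  have hD : 1 ≤ D := by
    have := mem_d_pos (prod_mem t)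
    rw [hP] at this
    simpa using this
  intro h
  rw [Pprod_cons, hP, gmat_mul, Matrix.one_fin_two, fin2_eq_iff] at h
  omega

lemma list_inj : ∀ l₁ l₂ : List ℕ+, Pprod l₁ = Pprod l₂ → l₁ = l₂
  | [], [] => fun _ => rfl
  | [], m :: t => fun h => absurd (Pprod_nil ▸ h.symm) (prod_ne_one m t)
  | m :: t, [] => fun h => absurd (Pprod_nil ▸ h) (prod_ne_one m t)
  | m :: t, m' :: t' => fun h => by
    obtain ⟨A,B,C,D,hP⟩ := eta4 (Pprod t)
    obtain ⟨A',B',C',D',hP'⟩ := eta4 (Pprod t')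
    rw [Pprod_cons, hP, Pprod_cons, hP'] at h
    rw [gmat_mul, gmat_mul, fin2_eq_iff] at h
    obtain ⟨hC, hD, hAC, hBD⟩ := h
    subst hC; subst hD
    have hmm : ((m:ℕ):ℤ) = ((m':ℕ):ℤ) := by
      apply head_unique C D (A + ((m:ℕ):ℤ)*C) (B + ((m:ℕ):ℤ)*D)
      · have : hmat ((m:ℕ):ℤ) C D (A + ((m:ℕ):ℤ)*C) (B + ((m:ℕ):ℤ)*D) = !![A,B;C,D] := by
          rw [hmat, fin2_eq_iff]
          refine ⟨by ring, by ring, rfl, rfl⟩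
        rw [this, ← hP]; exact prod_mem t
      · have : hmat ((m':ℕ):ℤ) C D (A + ((m:ℕ):ℤ)*C) (B + ((m:ℕ):ℤ)*D) = !![A',B';C,D] := by
          rw [hmat, fin2_eq_iff]
          refine ⟨by linarith, by linarith, rfl, rfl⟩
        rw [this, ← hP']; exact prod_mem t'
    have hm : m = m' := by exact_mod_cast hmm
    subst hm
    have hA : A = A' := by linarith
    have hB : B = B' := by linarith
    have ht : t = t' := list_inj t t' (by rw [hP, hP', hA, hB])
    rw [ht]

lemma exists_list : ∀ n : ℕ, ∀ g ∈ Mmon, (g 1 0 + g 1 1).toNat ≤ n →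
    ∃ l : List ℕ+, Pprod l = g := by
  intro n
  induction n with
  | zero =>
    intro g hg hle
    exfalso
    obtain ⟨a,b,c,d, rfl⟩ := eta4 g
    have hd := mem_d_pos hg
    rw [mem_iff] at hg
    have e1 : !![a,b;c,d] 1 0 = c := by norm_num
    have e2 : !![a,b;c,d] 1 1 = d := by norm_num
    rw [e1, e2] at hle
    rw [e2] at hd
    rcases hg with ⟨rfl,rfl,rfl,rfl⟩ | ⟨hdet, h1,h2,h3,h4,h5⟩
    · omega
    · omega
  | succ n ih =>
    intro g hg hle
    obtain ⟨a,b,c,d, rfl⟩ := eta4 g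
    have e1 : !![a,b;c,d] 1 0 = c := by norm_num
    have e2 : !![a,b;c,d] 1 1 = d := by norm_num
    rw [e1, e2] at hle
    rw [mem_iff] at hg
    rcases hg with ⟨rfl,rfl,rfl,rfl⟩ | ⟨hdet, h1,h2,h3,h4,h5⟩
    · exact ⟨[], by simp [Pprod, Matrix.one_fin_two]⟩
    · rcases eq_or_lt_of_le h3 with ha | ha
      · -- a = 0
        rw [← ha] at hdet h2 h5
        have hbc : b * c = 1 := by
          rcases hdet with h | h
          · nlinarith
          · linarith
        rcases Int.eq_one_or_neg_one_of_mul_eq_one' hbc with ⟨hb, hc⟩ | ⟨hb, hc⟩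
        · have hd1 : 1 ≤ d := by omega
          refine ⟨[Nat.toPNat d.toNat (by omega)], ?_⟩
          have : Pprod [Nat.toPNat d.toNat (by omega)] = gmat ((d.toNat : ℕ) : ℤ) := by
            exact mul_one _
          rw [this, Int.toNat_of_nonneg (by omega : (0:ℤ) ≤ d), gmat, fin2_eq_iff]
          omega
        · omega
      · -- 1 ≤ a
        have ha1 : 1 ≤ a := ha
        have hb1 : 1 ≤ b := le_trans ha1 h2
        suffices H : ∃ m : ℤ, 1 ≤ m ∧ hmat m a b c d ∈ Mmon by
          obtain ⟨m, hm1, hmem⟩ := H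
          have f1 : hmat m a b c d 1 0 = a := by norm_num [hmat]
          have f2 : hmat m a b c d 1 1 = b := by norm_num [hmat]
          have hne : ¬(a = c ∧ b = d) := by
            rintro ⟨rfl, rfl⟩
            rcases hdet with h | h <;> nlinarith
          have hmeas : (hmat m a b c d 1 0 + hmat m a b c d 1 1).toNat ≤ n := by
            rw [f1, f2]; omega
          obtain ⟨l, hl⟩ := ih (hmat m a b c d) hmem hmeas
          have hmn : 0 < m.toNat := by omega
          refine ⟨Nat.toPNat m.toNat hmn :: l, ?_⟩
          rw [Pprod_cons, hl]
          show gmat ((m.toNat : ℕ) : ℤ) * hmat m a b c d = _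
          rw [Int.toNat_of_nonneg (show (0:ℤ) ≤ m by omega)]
          exact gmat_hmat m a b c d
        -- now construct m
        set q : ℤ := c / a with hqdef
        have hq1 : 1 ≤ q := by
          rw [hqdef, Int.le_ediv_iff_mul_le (by omega : (0:ℤ) < a), one_mul]; exact h5
        have hr0 : 0 ≤ c % a := Int.emod_nonneg c (by omega)
        have hra : c % a < a := Int.emod_lt_of_pos c (by omega)
        have hcq : a * q + c % a = c := Int.mul_ediv_add_emod c a
        rcases hdet with hdet | hdet
        · -- det = 1, take m = q
          refine ⟨q, hq1, ?_⟩
          have key : a * (d - q*b) = b * (c % a) + 1 := by linear_combination hdet - b * hcq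
          rw [hmat, mem_iff]
          right
          have hBD : d - q*b ≤ b := by
            have h' : a * (d - q*b) ≤ a * b := by nlinarith [mul_nonneg (by omega : (0:ℤ) ≤ b) (by omega : (0:ℤ) ≤ a - (c % a) - 1)]
            exact le_of_mul_le_mul_left h' (by omega)
          have hAB : c - q*a ≤ d - q*b := by
            have h' : a * (c - q*a) ≤ a * (d - q*b) := by
              nlinarith [mul_nonneg hr0 (by omega : (0:ℤ) ≤ b - a)]
            exact le_of_mul_le_mul_left h' (by omega)
          refine ⟨Or.inr (by linear_combination -hdet), hBD, hAB, by linarith [hcq], h2, by nlinarith [hcq]⟩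
        · -- det = -1
          have hba : a < b := by
            rcases eq_or_lt_of_le h2 with h | h
            · exfalso; rw [← h] at hdet; nlinarith
            · exact h
          rcases eq_or_lt_of_le hr0 with hr | hr
          · -- c % a = 0, take m = q - 1
            have hceq : a * q = c := by omega
            have key : a * (d - q*b) = -1 := by linear_combination hdet - b * hceq
            have key2 : a * (-(d - q*b)) = 1 := by linear_combination -key
            rcases Int.eq_one_or_neg_one_of_mul_eq_one' key2 with ⟨haa, hxx⟩ | ⟨haa, hxx⟩
            · have hdq : d - q*b = -1 := by omega
              have hq2 : 2 ≤ q := by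
                by_contra hcon
                have hq' : q = 1 := by omega
                rw [hq', mul_one] at hceq
                nlinarith
              refine ⟨q - 1, by omega, ?_⟩
              rw [hmat, mem_iff]
              right
              have hA : c - (q-1)*a = a := by linear_combination -hceq
              have hB : d - (q-1)*b = b - 1 := by linarith
              rw [hA, hB]
              refine ⟨Or.inl (by linarith [haa]), by linarith, by omega, by omega, h2, le_refl a⟩
            · omega
          · -- 1 ≤ c % a, take m = q
            refine ⟨q, hq1, ?_⟩
            have key : a * (d - q*b) = b * (c % a) - 1 := by linear_combination hdet - b * hcq
            rw [hmat, mem_iff]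
            right
            have hBD : d - q*b ≤ b := by
              have h' : a * (d - q*b) ≤ a * b := by
                nlinarith [mul_nonneg (by omega : (0:ℤ) ≤ b) (by omega : (0:ℤ) ≤ a - (c % a))]
              exact le_of_mul_le_mul_left h' (by omega)
            have hAB : c - q*a ≤ d - q*b := by
              have h' : a * (c - q*a) ≤ a * (d - q*b) := by
                nlinarith [mul_le_mul_of_nonneg_right (by omega : (1:ℤ) ≤ c % a) (by omega : (0:ℤ) ≤ b - a)]
              exact le_of_mul_le_mul_left h' (by omega)
            refine ⟨Or.inl (by linear_combination -hdet), hBD, hAB, by linarith [hcq], h2, by nlinarith [hcq]⟩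

end BRJ


/-- every element of the monoid `ℳ` admits a unique factorization as a
product `g(m₁) ⋯ g(m_r)` with `mᵢ ≥ 1`; equivalently, the map sending a finite sequence
of positive integers to the corresponding matrix product is a bijection onto `ℳ`. -/
theorem monoid_M_free_on_generators :
    (∀ l : List ℕ+, (l.map fun m => gmat (m : ℕ)).prod ∈ Mmon) ∧
      ∀ g ∈ Mmon, ∃! l : List ℕ+, (l.map fun m => gmat (m : ℕ)).prod = g := by
  constructor
  · exact BRJ.prod_mem
  · intro g hg
    obtain ⟨l, hl⟩ := BRJ.exists_list (g 1 0 + g 1 1).toNat g hg le_rfl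
    exact ⟨l, hl, fun l' hl' => BRJ.list_inj l' l (hl'.trans hl.symm)⟩
end

section
/- (i) For every nonzero z ∈ ℂ with z ∉ D ∪ D₁ and every integer m ≥ 1, the point 1/z − m lies in D∞. (ii) For every z ∈ D₁, the point 1/z − 1 lies in D₀, and 1/z − m lies in D∞ for every integer m ≥ 2. (iii) The image of D under the map z ↦ 1/z equals the union ⋃_{m≥1}(Δ + m), and the translates Δ + m (m ≥ 1) have pairwise disjoint interiors. -/
open Complex Filter Set Topology
open scoped ENNReal NNReal

lemma sqnorm (w : ℂ) : ‖w‖^2 = Complex.normSq w := by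
  exact Complex.sq_norm w

lemma norm_le_iff' {w : ℂ} {r : ℝ} (hr : 0 ≤ r) : ‖w‖ ≤ r ↔ Complex.normSq w ≤ r^2 := by
  constructor <;> intro h <;> nlinarith [sqnorm w, norm_nonneg w]

lemma le_norm_iff' {w : ℂ} {r : ℝ} (hr : 0 ≤ r) : r ≤ ‖w‖ ↔ r^2 ≤ Complex.normSq w := by
  constructor <;> intro h <;> nlinarith [sqnorm w, norm_nonneg w]

lemma s3_fact : Real.sqrt 3 ^ 2 = 3 := Real.sq_sqrt (by norm_num)
lemma s3_pos : 0 < Real.sqrt 3 := Real.sqrt_pos.mpr (by norm_num)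
lemma s3_gt1 : 1 < Real.sqrt 3 := by nlinarith [s3_fact, s3_pos]

lemma d_iff {z : ℂ} (hz : z ≠ 0) :
    z ∈ Dset ↔ 1 ≤ ‖z⁻¹‖ ∧ |(z⁻¹).im| ≤ 1/2 ∧ 0 < (z⁻¹).re := by
  have hN : 0 < Complex.normSq z := Complex.normSq_pos.mpr hz
  have hn : 0 < ‖z‖ := norm_pos_iff.mpr hz
  have hni : ‖z⁻¹‖ = ‖z‖⁻¹ := norm_inv z
  have hre : (z⁻¹).re = z.re / Complex.normSq z := Complex.inv_re z
  have him : (z⁻¹).im = -z.im / Complex.normSq z := Complex.inv_im z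
  have e1 : Complex.normSq (z - Complex.I) = Complex.normSq z - 2*z.im + 1 := by
    simp [Complex.normSq_apply, Complex.sub_re, Complex.sub_im]; ring
  have e2 : Complex.normSq (z + Complex.I) = Complex.normSq z + 2*z.im + 1 := by
    simp [Complex.normSq_apply, Complex.add_re, Complex.add_im]; ring
  constructor
  · rintro ⟨h1, h2, h3, h4⟩
    rw [le_norm_iff' one_pos.le, e1] at h2
    rw [le_norm_iff' one_pos.le, e2] at h3
    refine ⟨?_, ?_, ?_⟩
    · rw [hni]; rw [le_inv_comm₀ one_pos hn]; simpa using h1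
    · rw [him, abs_le]
      constructor
      · rw [le_div_iff₀ hN]; nlinarith
      · rw [div_le_iff₀ hN]; nlinarith
    · rw [hre]; positivity
  · rintro ⟨h1, h2, h3⟩
    rw [hni, le_inv_comm₀ one_pos hn] at h1
    rw [him, abs_le] at h2
    obtain ⟨h2a, h2b⟩ := h2
    rw [le_div_iff₀ hN] at h2a
    rw [div_le_iff₀ hN] at h2b
    rw [hre] at h3
    refine ⟨by simpa using h1, ?_, ?_, ?_⟩
    · rw [le_norm_iff' one_pos.le, e1]; nlinarith
    · rw [le_norm_iff' one_pos.le, e2]; nlinarith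
    · have := (div_pos_iff.mp h3); rcases this with ⟨h,_⟩|⟨_,h⟩; exact h; linarith

lemma h13 : (1:ℝ) / Real.sqrt 3 = Real.sqrt 3 / 3 := by
  rw [div_eq_div_iff s3_pos.ne' (by norm_num : (3:ℝ) ≠ 0)]
  nlinarith [s3_fact]

lemma d1_iff {z : ℂ} (hz : z ≠ 0) :
    z ∈ D1set ↔ ‖z⁻¹‖ ≤ 1 ∧ Real.sqrt 3 / 2 ≤ (z⁻¹).re := by
  have hN : 0 < Complex.normSq z := Complex.normSq_pos.mpr hz
  have hn : 0 < ‖z‖ := norm_pos_iff.mpr hz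
  have hni : ‖z⁻¹‖ = ‖z‖⁻¹ := norm_inv z
  have hre : (z⁻¹).re = z.re / Complex.normSq z := Complex.inv_re z
  have hc : (0:ℝ) ≤ 1 / Real.sqrt 3 := by positivity
  have hcsq : ((1:ℝ) / Real.sqrt 3)^2 = 1/3 := by
    rw [h13, div_pow, s3_fact]; norm_num
  have e1 : Complex.normSq (z - ((1 / Real.sqrt 3 : ℝ) : ℂ)) =
      Complex.normSq z - 2 * z.re * Real.sqrt 3 / 3 + 1/3 := by
    simp only [Complex.normSq_apply, Complex.sub_re, Complex.sub_im,
      Complex.ofReal_re, Complex.ofReal_im, h13]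
    linear_combination (1/9 : ℝ) * s3_fact
  have hNeq : Complex.normSq z = z.re^2 + z.im^2 := by
    simp [Complex.normSq_apply]; ring
  constructor
  · rintro ⟨h1, h2⟩
    rw [norm_le_iff' hc, hcsq, e1] at h2
    rw [le_norm_iff' one_pos.le] at h1
    refine ⟨?_, ?_⟩
    · rw [hni, inv_le_comm₀ hn one_pos, show (1:ℝ)⁻¹ = 1 by norm_num,
        le_norm_iff' one_pos.le]; exact h1
    · rw [hre, le_div_iff₀ hN]; nlinarith [s3_fact, s3_pos]
  · rintro ⟨h1, h2⟩
    rw [hni, inv_le_comm₀ hn one_pos, show (1:ℝ)⁻¹ = 1 by norm_num] at h1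
    rw [hre, le_div_iff₀ hN] at h2
    refine ⟨by simpa using h1, ?_⟩
    rw [norm_le_iff' hc, hcsq, e1]
    nlinarith [s3_fact, s3_pos]

lemma subm_re (u : ℂ) (m : ℕ) : (u - (m:ℂ)).re = u.re - m := by simp
lemma subm_im (u : ℂ) (m : ℕ) : (u - (m:ℂ)).im = u.im := by simp

lemma mem_Dinf_of_re {w : ℂ} (h : w.re < Real.sqrt 3 / 2 - 1) : w ∈ Dinf :=
  Or.inl (Or.inr h)

lemma part_i : ∀ z : ℂ, z ≠ 0 → z ∉ Dset ∪ D1set →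
    ∀ m : ℕ, 1 ≤ m → z⁻¹ - (m : ℂ) ∈ Dinf := by
  intro z hz hzD m hm
  rw [Set.mem_union, not_or] at hzD
  obtain ⟨hD, hD1⟩ := hzD
  by_cases him : 1/2 < |(z⁻¹).im|
  · exact Or.inl (Or.inl (by rw [Set.mem_setOf_eq, subm_im]; exact him))
  push_neg at him
  have hm1 : (1:ℝ) ≤ m := by exact_mod_cast hm
  by_cases hre : 0 < (z⁻¹).re
  · have h1 : ¬ (1 ≤ ‖z⁻¹‖) := fun h => hD ((d_iff hz).mpr ⟨h, him, hre⟩)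
    push_neg at h1
    have h2 : ¬ (Real.sqrt 3 / 2 ≤ (z⁻¹).re) := fun h => hD1 ((d1_iff hz).mpr ⟨h1.le, h⟩)
    push_neg at h2
    apply mem_Dinf_of_re
    rw [subm_re]; linarith
  · push_neg at hre
    apply mem_Dinf_of_re
    rw [subm_re]
    nlinarith [s3_pos]

lemma part_ii : ∀ z ∈ D1set, z⁻¹ - 1 ∈ D0set ∧
    ∀ m : ℕ, 2 ≤ m → z⁻¹ - (m : ℂ) ∈ Dinf := by
  intro z hz
  have hz0 : z ≠ 0 := by
    intro h; rw [h] at hz; simp [D1set] at hz; exact absurd hz.1 (by norm_num)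
  obtain ⟨h1, h2⟩ := (d1_iff hz0).mp hz
  constructor
  · constructor
    · show ‖z⁻¹ - 1 + 1‖ ≤ 1
      rw [sub_add_cancel]; exact h1
    · show Real.sqrt 3 / 2 - 1 ≤ (z⁻¹ - 1).re
      have : (z⁻¹ - 1).re = (z⁻¹).re - 1 := by simp
      rw [this]; linarith
  · intro m hm
    have hm1 : (2:ℝ) ≤ m := by exact_mod_cast hm
    have hle : (z⁻¹).re ≤ 1 := le_trans (Complex.re_le_norm _) h1
    apply mem_Dinf_of_re
    rw [subm_re]
    nlinarith [s3_pos, s3_gt1]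

lemma delta_mem_iff {u : ℂ} : u ∈ Δset ↔
    u.re^2 + u.im^2 ≤ 1 ∧ 1 ≤ (u.re+1)^2 + u.im^2 ∧ |u.im| ≤ 1/2 := by
  have e0 : Complex.normSq u = u.re^2 + u.im^2 := by simp [Complex.normSq_apply]; ring
  have e1 : Complex.normSq (u + 1) = (u.re+1)^2 + u.im^2 := by
    simp [Complex.normSq_apply, Complex.add_re, Complex.add_im]; ring
  constructor
  · rintro ⟨h1, h2, h3⟩
    rw [norm_le_iff' one_pos.le, e0] at h1
    rw [le_norm_iff' one_pos.le, e1] at h2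
    exact ⟨by simpa using h1, by simpa using h2, h3⟩
  · rintro ⟨h1, h2, h3⟩
    exact ⟨by rw [norm_le_iff' one_pos.le, e0]; simpa using h1,
      by rw [le_norm_iff' one_pos.le, e1]; simpa using h2, h3⟩

lemma part_iii : (fun z : ℂ => z⁻¹) '' Dset =
    ⋃ m : ℕ, ⋃ _ : 1 ≤ m, (fun z : ℂ => z + (m : ℂ)) '' Δset := by
  ext w
  simp only [Set.mem_iUnion, Set.mem_image]
  constructor
  · rintro ⟨z, hz, rfl⟩
    have hz0 : z ≠ 0 := by
      intro h; rw [h] at hz; exact absurd hz.2.2.2 (by simp)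
    obtain ⟨h1, h2, h3⟩ := (d_iff hz0).mp hz
    set u := z⁻¹ with hu
    set r := u.re
    set t := u.im
    have hN : 1 ≤ r^2 + t^2 := by
      have := (le_norm_iff' one_pos.le).mp h1
      simp only [Complex.normSq_apply] at this; nlinarith
    have ht2 : t^2 ≤ 1/4 := by
      have := abs_le.mp h2; nlinarith
    set s := Real.sqrt (1 - t^2) with hs
    have hs2 : s^2 = 1 - t^2 := Real.sq_sqrt (by nlinarith)
    have hs0 : 0 ≤ s := Real.sqrt_nonneg _
    have hshalf : 1/2 ≤ s := by nlinarith
    have hrs : s ≤ r := by nlinarith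
    set k := ⌈r - s⌉ with hk
    have hk1 : r - s ≤ k := Int.le_ceil _
    have hk2 : (k:ℝ) < r - s + 1 := Int.ceil_lt_add_one _
    by_cases hkpos : 1 ≤ k
    · refine ⟨k.toNat, ?_, u - (k.toNat : ℂ), ?_, by ring⟩
      · omega
      have hcast : ((k.toNat : ℕ) : ℝ) = (k : ℝ) := by
        have h0 : (0:ℤ) ≤ k := by omega
        exact_mod_cast Int.toNat_of_nonneg h0
      rw [delta_mem_iff]
      refine ⟨?_, ?_, by rw [subm_im]; exact h2⟩
      · rw [subm_re, subm_im, hcast]; nlinarith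
      · rw [subm_re, subm_im, hcast]; nlinarith
    · have hr_eq : r = s := by
        have hk0 : (k:ℝ) ≤ 0 := by
          exact_mod_cast Int.lt_add_one_iff.mp (by simpa using lt_of_not_ge hkpos)
        linarith
      refine ⟨1, le_refl 1, u - 1, ?_, by ring⟩
      have h1re : ((1:ℕ):ℂ) = (1:ℂ) := by norm_num
      rw [delta_mem_iff]
      refine ⟨?_, ?_, by simpa using h2⟩
      · have : (u - 1).re = r - 1 ∧ (u - 1).im = t := by simp [r, t]
        rw [this.1, this.2]; nlinarith
      · have : (u - 1).re = r - 1 ∧ (u - 1).im = t := by simp [r, t]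
        rw [this.1, this.2]; nlinarith
  · rintro ⟨m, hm, u, hu, rfl⟩
    rw [delta_mem_iff] at hu
    obtain ⟨h1, h2, h3⟩ := hu
    have hm1 : (1:ℝ) ≤ m := by exact_mod_cast hm
    have habs := abs_le.mp h3
    have hre : (u + (m:ℂ)).re = u.re + m := by simp
    have him : (u + (m:ℂ)).im = u.im := by simp
    have hrepos : 0 < (u + (m:ℂ)).re := by rw [hre]; nlinarith
    have hw0 : u + (m:ℂ) ≠ 0 := by
      intro h
      have := congrArg Complex.re h
      rw [hre] at this; simp at this; nlinarith
    refine ⟨(u + (m:ℂ))⁻¹, ?_, inv_inv _⟩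
    rw [d_iff (inv_ne_zero hw0), inv_inv]
    refine ⟨?_, by rw [him]; exact h3, hrepos⟩
    rw [le_norm_iff' one_pos.le]
    simp only [Complex.normSq_apply, hre, him]
    nlinarith [mul_nonneg (by linarith : (0:ℝ) ≤ (m:ℝ) - 1) (by nlinarith : 0 ≤ u.re + 1/2)]

lemma inter_sub_sphere {m n : ℕ} (hm : 1 ≤ m) (hmn : m < n) :
    ((fun z : ℂ => z + (m : ℂ)) '' Δset) ∩ ((fun z : ℂ => z + (n : ℂ)) '' Δset)
      ⊆ Metric.sphere ((m:ℂ)) 1 := by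
  rintro w ⟨⟨u, hu, rfl⟩, v, hv, hvw⟩
  rw [delta_mem_iff] at hu
  rw [delta_mem_iff] at hv
  have hv_re : v.re = u.re + m - n := by
    have := congrArg Complex.re hvw
    simp at this; linarith
  have hv_im : v.im = u.im := by
    have := congrArg Complex.im hvw
    simpa using this
  rw [mem_sphere_iff_norm]
  have : u + (m:ℂ) - (m:ℂ) = u := by ring
  rw [this]
  have hd1 : (1:ℝ) ≤ (n:ℝ) - m := by
    have : (m:ℝ) + 1 ≤ n := by exact_mod_cast hmn
    linarith
  rw [hv_re, hv_im] at hv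
  obtain ⟨hv1, hv2, _⟩ := hv
  obtain ⟨hu1, hu2, _⟩ := hu
  -- p = u.re + m - n, facts: p^2 + b^2 ≤ 1 (hv1), (p+1)^2 + b^2 ≥ 1 (hv2),
  -- u.re^2 + b^2 ≤ 1 (hu1); u.re = p + (n - m), n - m ≥ 1; want ‖u‖ = 1
  have hge : 1 ≤ u.re^2 + u.im^2 := by
    have hp1 : 0 ≤ u.re + m - n + 1 := by nlinarith [sq_nonneg u.im]
    nlinarith [mul_nonneg (by linarith : (0:ℝ) ≤ (n:ℝ) - m - 1)
      (by linarith : 0 ≤ (u.re + m - n + 1) + (u.re))]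
  have heq : u.re^2 + u.im^2 = 1 := le_antisymm hu1 hge
  have : ‖u‖^2 = 1 := by rw [sqnorm]; simp [Complex.normSq_apply]; nlinarith
  nlinarith [norm_nonneg u]

lemma part_iv : ∀ m n : ℕ, 1 ≤ m → 1 ≤ n → m ≠ n →
    interior ((fun z : ℂ => z + (m : ℂ)) '' Δset) ∩
        interior ((fun z : ℂ => z + (n : ℂ)) '' Δset) = ∅ := by
  have key : ∀ m n : ℕ, 1 ≤ m → m < n →
      interior ((fun z : ℂ => z + (m : ℂ)) '' Δset) ∩
        interior ((fun z : ℂ => z + (n : ℂ)) '' Δset) = ∅ := by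
    intro m n hm hmn
    rw [← interior_inter]
    have h := interior_mono (inter_sub_sphere hm hmn)
    rw [interior_sphere _ (by norm_num : (1:ℝ) ≠ 0)] at h
    exact Set.subset_empty_iff.mp h
  intro m n hm hn hmn
  rcases lt_or_gt_of_ne hmn with h | h
  · exact key m n hm h
  · rw [Set.inter_comm]; exact key n m hn h

/-- basic properties of the domains of the complex continued fraction:
(i) if `z ≠ 0` and `z ∉ D ∪ D₁` then `1/z − m ∈ D∞` for all integers `m ≥ 1`;
(ii) if `z ∈ D₁` then `1/z − 1 ∈ D₀` and `1/z − m ∈ D∞` for all integers `m ≥ 2`;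
(iii) the image of `D` under `z ↦ 1/z` is `⋃_{m ≥ 1} (Δ + m)`, and the translates
`Δ + m` (`m ≥ 1`) have pairwise disjoint interiors. -/
theorem complex_cf_domains :
    (∀ z : ℂ, z ≠ 0 → z ∉ Dset ∪ D1set →
        ∀ m : ℕ, 1 ≤ m → z⁻¹ - (m : ℂ) ∈ Dinf) ∧
      (∀ z ∈ D1set, z⁻¹ - 1 ∈ D0set ∧ ∀ m : ℕ, 2 ≤ m → z⁻¹ - (m : ℂ) ∈ Dinf) ∧
      ((fun z : ℂ => z⁻¹) '' Dset =
        ⋃ m : ℕ, ⋃ _ : 1 ≤ m, (fun z : ℂ => z + (m : ℂ)) '' Δset) ∧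
      ∀ m n : ℕ, 1 ≤ m → 1 ≤ n → m ≠ n →
        interior ((fun z : ℂ => z + (m : ℂ)) '' Δset) ∩
            interior ((fun z : ℂ => z + (n : ℂ)) '' Δset) = ∅ := by
  exact ⟨part_i, part_ii, part_iii, part_iv⟩
end
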